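/- Let U be a set of units such that the set of crossing-free combinations of U is serializable and progressive. Then the equivalence relation ≐ defined by equality of lower shadows, equality of vertex-point sets minus lower shadows, and equality of leftmost points of right-most extreme elements, is coherent: if C₁ ≐ C₂ and C₁ extends to C₁' by adding the unit u as new right-most extreme element, then C₂ ∪ {u} is a crossing-free combination, is equivalent to C₁', has u as its right-most extreme element, and u ∉ C₂. -/

import Mathlib

/-!
Statement 5: coherence of the equivalence relation on crossing-free
combinations of a serializable and progressive set of units.
-/

open scoped Classical

noncomputable section

abbrev Pt := ℝ × ℝ

def GenPos (P : Set Pt) : Prop :=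
  ∀ a ∈ P, ∀ b ∈ P, ∀ c ∈ P, a ≠ b → a ≠ c → b ≠ c → ¬ Collinear ℝ ({a, b, c} : Set Pt)

def DistinctX (P : Set Pt) : Prop :=
  ∀ a ∈ P, ∀ b ∈ P, a ≠ b → a.1 ≠ b.1

/-- A unit: a crossing-free geometric graph on a nonempty subset of `P`. -/
structure GGraph (P : Set Pt) where
  V : Set Pt
  E : Set (Pt × Pt)
  hVP : V ⊆ P
  hVfin : V.Finite
  hVne : V.Nonempty
  hE : ∀ e ∈ E, e.1 ∈ V ∧ e.2 ∈ V ∧ e.1 ≠ e.2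
  hCF : ∀ e ∈ E, ∀ f ∈ E,
    ¬ ((openSegment ℝ e.1 e.2 ∩ openSegment ℝ f.1 f.2).Nonempty ∧
        ({e.1, e.2} : Set Pt) ≠ {f.1, f.2})

/-- Two units cross: some edge of one and a different edge of the other
intersect in their relative interiors. -/
def GCross {P : Set Pt} (u₁ u₂ : GGraph P) : Prop :=
  ∃ e ∈ u₁.E, ∃ f ∈ u₂.E,
    (openSegment ℝ e.1 e.2 ∩ openSegment ℝ f.1 f.2).Nonempty ∧
      ({e.1, e.2} : Set Pt) ≠ {f.1, f.2}

/-- Lower shadow of a unit. -/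
def lowG {P : Set Pt} (u : GGraph P) : Set Pt :=
  {q ∈ P | ∃ e ∈ u.E, ∃ z ∈ openSegment ℝ e.1 e.2, z.1 = q.1 ∧ q.2 < z.2}

/-- Upper shadow of a unit. -/
def upG {P : Set Pt} (u : GGraph P) : Set Pt :=
  {q ∈ P | ∃ e ∈ u.E, ∃ z ∈ openSegment ℝ e.1 e.2, z.1 = q.1 ∧ z.2 < q.2}

/-- `u₂` depends on `u₁`. -/
def GDependsOn {P : Set Pt} (u₁ u₂ : GGraph P) : Prop :=
  (u₁.V ∩ lowG u₂).Nonempty ∨ (upG u₁ ∩ u₂.V).Nonempty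

/-- x-coordinate of the left-most point of a unit. -/
def lftx {P : Set Pt} (u : GGraph P) : ℝ := sInf (Prod.fst '' u.V)

/-- x-coordinate of the right-most point of a unit. -/
def rgtx {P : Set Pt} (u : GGraph P) : ℝ := sSup (Prod.fst '' u.V)

/-- Vertex points of a combination. -/
def ptsC {P : Set Pt} (C : Set (GGraph P)) : Set Pt := ⋃ u ∈ C, u.V

/-- Lower shadow of a combination. -/
def lowC {P : Set Pt} (C : Set (GGraph P)) : Set Pt := ⋃ u ∈ C, lowG u

/-- Crossing-free combinations of the units `U`. -/
def CFcomb {P : Set Pt} (U : Set (GGraph P)) : Set (Set (GGraph P)) :=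
  {C | C ⊆ U ∧ C.Finite ∧ ∀ u ∈ C, ∀ v ∈ C, ¬ GCross u v}

/-- `u` is extreme in `C`: no other element of `C` depends on `u`. -/
def Extreme {P : Set Pt} (C : Set (GGraph P)) (u : GGraph P) : Prop :=
  u ∈ C ∧ ∀ v ∈ C, v ≠ u → ¬ GDependsOn u v

/-- `u` is the right-most extreme element of `C`. -/
def RME {P : Set Pt} (C : Set (GGraph P)) (u : GGraph P) : Prop :=
  Extreme C u ∧ ∀ v, Extreme C v → v ≠ u → rgtx v ≤ lftx u

/-- The equivalence relation on crossing-free combinations: equal lower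
shadows, equal vertex points outside the lower shadows, and equal leftmost
points of the right-most extreme elements. -/
def CEqv {P : Set Pt} (C₁ C₂ : Set (GGraph P)) : Prop :=
  lowC C₁ = lowC C₂ ∧ ptsC C₁ \ lowC C₁ = ptsC C₂ \ lowC C₂ ∧
    ∀ u₁ u₂, RME C₁ u₁ → RME C₂ u₂ → lftx u₁ = lftx u₂

/-- Serializability of `CFcomb U`. -/
def Serializable {P : Set Pt} (U : Set (GGraph P)) : Prop :=
  ∅ ∈ CFcomb U ∧
    ∀ C ∈ CFcomb U, C.Nonempty → ∃ u, RME C u ∧ C \ {u} ∈ CFcomb U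

/-- Progressiveness of `CFcomb U`. -/
def Progressive {P : Set Pt} (U : Set (GGraph P)) : Prop :=
  ∀ C C' : Set (GGraph P), ∀ u, C' ∈ CFcomb U → RME C' u → C = C' \ {u} →
    ¬ CEqv C C'

namespace CFAux

def slope (a b : Pt) : ℝ := (b.2 - a.2) / (b.1 - a.1)

def ht (a b : Pt) (x : ℝ) : ℝ := a.2 + (x - a.1) * slope a b

lemma ht_left (a b : Pt) : ht a b a.1 = a.2 := by simp [ht]

lemma ht_right (a b : Pt) (h : a.1 ≠ b.1) : ht a b b.1 = b.2 := by
  have h' : b.1 - a.1 ≠ 0 := sub_ne_zero.mpr (Ne.symm h)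
  rw [ht, slope, mul_div_assoc', mul_div_cancel_left₀ _ h']; ring

lemma ht_diff (a b : Pt) (x y : ℝ) : ht a b x - ht a b y = (x - y) * slope a b := by
  simp [ht]; ring

lemma mem_open_elim {a b : Pt} (h : a.1 < b.1) {z : Pt} (hz : z ∈ openSegment ℝ a b) :
    a.1 < z.1 ∧ z.1 < b.1 ∧ z.2 = ht a b z.1 := by
  rw [openSegment_eq_image] at hz
  obtain ⟨θ, ⟨h0, h1⟩, rfl⟩ := hz
  have hx : ((1 - θ) • a + θ • b).1 = (1 - θ) * a.1 + θ * b.1 := by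
    simp [Prod.fst_add]
  have hy : ((1 - θ) • a + θ • b).2 = (1 - θ) * a.2 + θ * b.2 := by
    simp [Prod.snd_add]
  rw [hx, hy]
  have hba : b.1 - a.1 ≠ 0 := sub_ne_zero.mpr (ne_of_gt h)
  refine ⟨by nlinarith, by nlinarith, ?_⟩
  rw [ht, slope]
  field_simp
  ring

lemma mem_open_intro {a b : Pt} (h : a.1 < b.1) {x : ℝ} (h1 : a.1 < x) (h2 : x < b.1) :
    ((x, ht a b x) : Pt) ∈ openSegment ℝ a b := by
  rw [openSegment_eq_image]
  have hba : b.1 - a.1 ≠ 0 := sub_ne_zero.mpr (ne_of_gt h)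
  refine ⟨(x - a.1) / (b.1 - a.1), ⟨div_pos (by linarith) (by linarith),
    (div_lt_one (by linarith)).mpr (by linarith)⟩, ?_⟩
  have hpq : ∀ p q : Pt, p.1 = q.1 → p.2 = q.2 → p = q := fun p q hh1 hh2 => Prod.ext hh1 hh2
  apply hpq
  · show (1 - (x - a.1) / (b.1 - a.1)) * a.1 + (x - a.1) / (b.1 - a.1) * b.1 = x
    field_simp
    ring
  · show (1 - (x - a.1) / (b.1 - a.1)) * a.2 + (x - a.1) / (b.1 - a.1) * b.2 = ht a b x
    rw [ht, slope]
    field_simp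
    ring

lemma collinear_of_ht {a b p : Pt} (h : a.1 < b.1) (hp : p.2 = ht a b p.1) :
    Collinear ℝ ({a, b, p} : Set Pt) := by
  have hmem : a ∈ ({a, b, p} : Set Pt) := by simp
  rw [collinear_iff_of_mem hmem]
  refine ⟨b - a, ?_⟩
  intro q hq
  have hba : b.1 - a.1 ≠ 0 := sub_ne_zero.mpr (ne_of_gt h)
  rcases hq with rfl | rfl | rfl
  · exact ⟨0, by simp⟩
  · exact ⟨1, by simp⟩
  · refine ⟨(q.1 - a.1) / (b.1 - a.1), ?_⟩
    have hpq : ∀ p q : Pt, p.1 = q.1 → p.2 = q.2 → p = q := fun p q hh1 hh2 => Prod.ext hh1 hh2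
    apply hpq
    · show q.1 = (q.1 - a.1) / (b.1 - a.1) * (b.1 - a.1) + a.1
      field_simp
      ring
    · show q.2 = (q.1 - a.1) / (b.1 - a.1) * (b.2 - a.2) + a.2
      rw [hp, ht, slope]
      field_simp
      ring

/-- Key lemma (ordered form): if at a common abscissa the open segment `ab`
is strictly below the open segment `cd`, then some endpoint of `ab` is
strictly below `cd`, or some endpoint of `cd` is strictly above `ab`. -/
lemma key_aux {P : Set Pt} (hdx : DistinctX P) {a b c d : Pt}
    (ha : a ∈ P) (hb : b ∈ P) (hc : c ∈ P) (hd : d ∈ P)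
    (hab : a.1 < b.1) (hcd : c.1 < d.1)
    {x₀ : ℝ} (hxa : a.1 < x₀) (hxb : x₀ < b.1) (hxc : c.1 < x₀) (hxd : x₀ < d.1)
    (hlt : ht a b x₀ < ht c d x₀) :
    (∃ p, (p = a ∨ p = b) ∧ ∃ w ∈ openSegment ℝ c d, w.1 = p.1 ∧ p.2 < w.2) ∨
    (∃ q, (q = c ∨ q = d) ∧ ∃ z ∈ openSegment ℝ a b, z.1 = q.1 ∧ z.2 < q.2) := by
  set L := max a.1 c.1 with hL
  set R := min b.1 d.1 with hR
  have hLx : L < x₀ := max_lt hxa hxc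
  have hxR : x₀ < R := lt_min hxb hxd
  have hside : ht a b L < ht c d L ∨ ht a b R < ht c d R := by
    by_contra hcon
    push_neg at hcon
    obtain ⟨h1, h2⟩ := hcon
    -- affine: g x := ht c d x - ht a b x ; g L ≤ 0, g R ≤ 0, but g x₀ > 0
    have e1 : ht c d L - ht a b L = (ht c d x₀ - ht a b x₀) + (L - x₀) * (slope c d - slope a b) := by
      have d1 := ht_diff c d L x₀
      have d2 := ht_diff a b L x₀
      linarith [d1, d2, mul_sub (L - x₀) (slope c d) (slope a b)]
    have e2 : ht c d R - ht a b R = (ht c d x₀ - ht a b x₀) + (R - x₀) * (slope c d - slope a b) := by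
      have d1 := ht_diff c d R x₀
      have d2 := ht_diff a b R x₀
      linarith [d1, d2, mul_sub (R - x₀) (slope c d) (slope a b)]
    rcases le_total (slope c d - slope a b) 0 with hB | hB
    · nlinarith
    · nlinarith
  rcases hside with hgood | hgood
  · -- left side : compare a.1 and c.1
    rcases lt_trichotomy a.1 c.1 with h | h | h
    · -- L = c.1 : c strictly above open ab
      have hLc : L = c.1 := max_eq_right (le_of_lt h)
      rw [hLc, ht_left] at hgood
      have hcb : c.1 < b.1 := lt_trans hxc hxb
      exact Or.inr ⟨c, Or.inl rfl, (c.1, ht a b c.1), mem_open_intro hab h hcb, rfl, hgood⟩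
    · -- a.1 = c.1 : then a = c, contradiction
      have : a = c := by
        by_contra hne
        exact hdx a ha c hc hne h
      subst this
      have hLa : L = a.1 := max_self a.1
      rw [hLa, ht_left, ht_left] at hgood
      exact absurd hgood (lt_irrefl _)
    · -- L = a.1 : a strictly below open cd
      have hLa : L = a.1 := max_eq_left (le_of_lt h)
      rw [hLa, ht_left] at hgood
      have had : a.1 < d.1 := lt_trans hxa hxd
      exact Or.inl ⟨a, Or.inl rfl, (a.1, ht c d a.1), mem_open_intro hcd h had, rfl, hgood⟩
  · -- right side : compare b.1 and d.1
    rcases lt_trichotomy b.1 d.1 with h | h | h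
    · -- R = b.1 : b strictly below open cd
      have hRb : R = b.1 := min_eq_left (le_of_lt h)
      rw [hRb, ht_right a b (ne_of_lt hab)] at hgood
      have hcb : c.1 < b.1 := lt_trans hxc hxR |>.trans_le (hRb ▸ le_refl R)
      exact Or.inl ⟨b, Or.inr rfl, (b.1, ht c d b.1), mem_open_intro hcd hcb h, rfl, hgood⟩
    · -- b.1 = d.1 : then b = d, contradiction
      have : b = d := by
        by_contra hne
        exact hdx b hb d hd hne h
      subst this
      have hRb : R = b.1 := min_self b.1
      rw [hRb, ht_right a b (ne_of_lt hab), ht_right c b (ne_of_lt hcd)] at hgood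
      exact absurd hgood (lt_irrefl _)
    · -- R = d.1 : d strictly above open ab
      have hRd : R = d.1 := min_eq_right (le_of_lt h)
      rw [hRd, ht_right c d (ne_of_lt hcd)] at hgood
      have had : a.1 < d.1 := lt_trans hxa hxd
      exact Or.inr ⟨d, Or.inr rfl, (d.1, ht a b d.1), mem_open_intro hab had h, rfl, hgood⟩

/-- Unordered form of the key lemma. -/
lemma key_below {P : Set Pt} (hdx : DistinctX P) {a b c d : Pt}
    (ha : a ∈ P) (hb : b ∈ P) (hc : c ∈ P) (hd : d ∈ P)
    (hab : a ≠ b) (hcd : c ≠ d)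
    {z w : Pt} (hz : z ∈ openSegment ℝ a b) (hw : w ∈ openSegment ℝ c d)
    (hx : z.1 = w.1) (hy : z.2 < w.2) :
    (∃ p, (p = a ∨ p = b) ∧ ∃ w' ∈ openSegment ℝ c d, w'.1 = p.1 ∧ p.2 < w'.2) ∨
    (∃ q, (q = c ∨ q = d) ∧ ∃ z' ∈ openSegment ℝ a b, z'.1 = q.1 ∧ z'.2 < q.2) := by
  have hxab : a.1 ≠ b.1 := hdx a ha b hb hab
  have hxcd : c.1 ≠ d.1 := hdx c hc d hd hcd
  -- normalize both segments to increasing order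
  rcases hxab.lt_or_gt with h1 | h1 <;> rcases hxcd.lt_or_gt with h2 | h2
  · obtain ⟨e1, e2, e3⟩ := mem_open_elim h1 hz
    obtain ⟨f1, f2, f3⟩ := mem_open_elim h2 hw
    have hlt : ht a b z.1 < ht c d z.1 := by rw [← e3, hx, ← f3]; exact hy
    exact key_aux hdx ha hb hc hd h1 h2 e1 e2 (hx ▸ f1) (hx ▸ f2) hlt
  · rw [openSegment_symm] at hw
    obtain ⟨e1, e2, e3⟩ := mem_open_elim h1 hz
    obtain ⟨f1, f2, f3⟩ := mem_open_elim h2 hw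
    have hlt : ht a b z.1 < ht d c z.1 := by rw [← e3, hx, ← f3]; exact hy
    rcases key_aux hdx ha hb hd hc h1 h2 e1 e2 (hx ▸ f1) (hx ▸ f2) hlt with
      ⟨p, hp, w', hw', hxx, hyy⟩ | ⟨q, hq, z', hz', hxx, hyy⟩
    · exact Or.inl ⟨p, hp, w', by rwa [openSegment_symm] at hw', hxx, hyy⟩
    · exact Or.inr ⟨q, hq.symm, z', hz', hxx, hyy⟩
  · rw [openSegment_symm] at hz
    obtain ⟨e1, e2, e3⟩ := mem_open_elim h1 hz
    obtain ⟨f1, f2, f3⟩ := mem_open_elim h2 hw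
    have hlt : ht b a z.1 < ht c d z.1 := by rw [← e3, hx, ← f3]; exact hy
    rcases key_aux hdx hb ha hc hd h1 h2 e1 e2 (hx ▸ f1) (hx ▸ f2) hlt with
      ⟨p, hp, w', hw', hxx, hyy⟩ | ⟨q, hq, z', hz', hxx, hyy⟩
    · exact Or.inl ⟨p, hp.symm, w', hw', hxx, hyy⟩
    · exact Or.inr ⟨q, hq, z', by rwa [openSegment_symm] at hz', hxx, hyy⟩
  · rw [openSegment_symm] at hz hw
    obtain ⟨e1, e2, e3⟩ := mem_open_elim h1 hz
    obtain ⟨f1, f2, f3⟩ := mem_open_elim h2 hw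
    have hlt : ht b a z.1 < ht d c z.1 := by rw [← e3, hx, ← f3]; exact hy
    rcases key_aux hdx hb ha hd hc h1 h2 e1 e2 (hx ▸ f1) (hx ▸ f2) hlt with
      ⟨p, hp, w', hw', hxx, hyy⟩ | ⟨q, hq, z', hz', hxx, hyy⟩
    · exact Or.inl ⟨p, hp.symm, w', by rwa [openSegment_symm] at hw', hxx, hyy⟩
    · exact Or.inr ⟨q, hq.symm, z', by rwa [openSegment_symm] at hz', hxx, hyy⟩

/-- If two open segments with endpoints in P meet and the endpoint pairs differ,
then somewhere the first is strictly below the second. -/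
lemma cross_aux {P : Set Pt} (hgp : GenPos P) (hdx : DistinctX P) {a b c d : Pt}
    (ha : a ∈ P) (hb : b ∈ P) (hc : c ∈ P) (hd : d ∈ P)
    (h1 : a.1 < b.1) (h2 : c.1 < d.1)
    {z : Pt} (hz : z ∈ openSegment ℝ a b) (hz' : z ∈ openSegment ℝ c d)
    (hne : ({a, b} : Set Pt) ≠ {c, d}) :
    ∃ z' w' : Pt, z' ∈ openSegment ℝ a b ∧ w' ∈ openSegment ℝ c d ∧
      z'.1 = w'.1 ∧ z'.2 < w'.2 := by
  obtain ⟨e1, e2, e3⟩ := mem_open_elim h1 hz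
  obtain ⟨f1, f2, f3⟩ := mem_open_elim h2 hz'
  have hab : a ≠ b := fun h => (ne_of_lt h1) (by rw [h])
  have hcd : c ≠ d := fun h => (ne_of_lt h2) (by rw [h])
  set x₀ := z.1 with hx₀
  have heq : ht a b x₀ = ht c d x₀ := by rw [← e3, ← f3]
  rcases eq_or_ne (slope a b) (slope c d) with hm | hm
  · -- same line through z : degenerate, contradicts general position
    exfalso
    have hfun : ∀ x, ht c d x = ht a b x := by
      intro x
      have d1 := ht_diff c d x x₀
      have d2 := ht_diff a b x x₀
      rw [hm] at d2
      linarith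
    have hcases : c ∉ ({a, b} : Set Pt) ∨ d ∉ ({a, b} : Set Pt) ∨
        a ∉ ({c, d} : Set Pt) ∨ b ∉ ({c, d} : Set Pt) := by
      by_contra hcc
      push_neg at hcc
      obtain ⟨g1, g2, g3, g4⟩ := hcc
      refine hne (Set.Subset.antisymm ?_ ?_)
      · intro x hx
        rcases hx with rfl | hx
        · exact g3
        · rw [Set.mem_singleton_iff] at hx; subst hx; exact g4
      · intro x hx
        rcases hx with rfl | hx
        · exact g1
        · rw [Set.mem_singleton_iff] at hx; subst hx; exact g2
    have hmem : ∀ x : Pt, x ∉ ({a, b} : Set Pt) → x ≠ a ∧ x ≠ b := by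
      intro x hx
      constructor <;> · rintro rfl; exact hx (by simp)
    have hmem' : ∀ x : Pt, x ∉ ({c, d} : Set Pt) → x ≠ c ∧ x ≠ d := by
      intro x hx
      constructor <;> · rintro rfl; exact hx (by simp)
    rcases hcases with hmiss | hmiss | hmiss | hmiss
    · obtain ⟨hca, hcb⟩ := hmem c hmiss
      have hcc : c.2 = ht a b c.1 := by rw [← hfun, ht_left]
      exact hgp a ha b hb c hc hab (Ne.symm hca) (Ne.symm hcb) (collinear_of_ht h1 hcc)
    · obtain ⟨hda, hdb⟩ := hmem d hmiss
      have hdd : d.2 = ht a b d.1 := by rw [← hfun, ht_right c d (ne_of_lt h2)]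
      exact hgp a ha b hb d hd hab (Ne.symm hda) (Ne.symm hdb) (collinear_of_ht h1 hdd)
    · obtain ⟨hac, had⟩ := hmem' a hmiss
      have haa : a.2 = ht c d a.1 := by rw [hfun, ht_left]
      exact hgp c hc d hd a ha hcd (Ne.symm hac) (Ne.symm had) (collinear_of_ht h2 haa)
    · obtain ⟨hbc, hbd⟩ := hmem' b hmiss
      have hbb : b.2 = ht c d b.1 := by rw [hfun, ht_right a b (ne_of_lt h1)]
      exact hgp c hc d hd b hb hcd (Ne.symm hbc) (Ne.symm hbd) (collinear_of_ht h2 hbb)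
  · rcases hm.lt_or_gt with hlt | hlt
    · -- slope ab < slope cd : go right
      set x := (x₀ + min b.1 d.1) / 2 with hx
      have hmlt : x₀ < min b.1 d.1 := lt_min e2 f2
      have hxlt : x₀ < x := by
        rw [hx]; linarith
      have hxb : x < b.1 := by
        have := min_le_left b.1 d.1; rw [hx]; linarith
      have hxd : x < d.1 := by
        have := min_le_right b.1 d.1; rw [hx]; linarith
      refine ⟨(x, ht a b x), (x, ht c d x),
        mem_open_intro h1 (lt_trans e1 hxlt) hxb,
        mem_open_intro h2 (lt_trans f1 hxlt) hxd, rfl, ?_⟩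
      have d1 := ht_diff a b x x₀
      have d2 := ht_diff c d x x₀
      have hpos : 0 < x - x₀ := by linarith
      nlinarith [mul_lt_mul_of_pos_left hlt hpos]
    · -- slope cd < slope ab : go left
      set x := (max a.1 c.1 + x₀) / 2 with hx
      have hmlt : max a.1 c.1 < x₀ := max_lt e1 f1
      have hxlt : x < x₀ := by rw [hx]; linarith
      have hxa : a.1 < x := by
        have := le_max_left a.1 c.1; rw [hx]; linarith
      have hxc : c.1 < x := by
        have := le_max_right a.1 c.1; rw [hx]; linarith
      refine ⟨(x, ht a b x), (x, ht c d x),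
        mem_open_intro h1 hxa (lt_trans hxlt e2),
        mem_open_intro h2 hxc (lt_trans hxlt f2), rfl, ?_⟩
      have d1 := ht_diff a b x x₀
      have d2 := ht_diff c d x x₀
      have hneg : x - x₀ < 0 := by linarith
      nlinarith [mul_lt_mul_of_neg_left hlt hneg]

/-- Unordered form. -/
lemma cross_below {P : Set Pt} (hgp : GenPos P) (hdx : DistinctX P) {a b c d : Pt}
    (ha : a ∈ P) (hb : b ∈ P) (hc : c ∈ P) (hd : d ∈ P)
    (hab : a ≠ b) (hcd : c ≠ d)
    {z : Pt} (hz : z ∈ openSegment ℝ a b) (hz' : z ∈ openSegment ℝ c d)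
    (hne : ({a, b} : Set Pt) ≠ {c, d}) :
    ∃ z' w' : Pt, z' ∈ openSegment ℝ a b ∧ w' ∈ openSegment ℝ c d ∧
      z'.1 = w'.1 ∧ z'.2 < w'.2 := by
  have hxab : a.1 ≠ b.1 := hdx a ha b hb hab
  have hxcd : c.1 ≠ d.1 := hdx c hc d hd hcd
  rcases hxab.lt_or_gt with h1 | h1 <;> rcases hxcd.lt_or_gt with h2 | h2
  · exact cross_aux hgp hdx ha hb hc hd h1 h2 hz hz' hne
  · rw [openSegment_symm] at hz'
    have hne' : ({a, b} : Set Pt) ≠ {d, c} := by rw [Set.pair_comm d c]; exact hne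
    obtain ⟨z', w', m1, m2, m3, m4⟩ := cross_aux hgp hdx ha hb hd hc h1 h2 hz hz' hne'
    exact ⟨z', w', m1, by rwa [openSegment_symm] at m2, m3, m4⟩
  · rw [openSegment_symm] at hz
    have hne' : ({b, a} : Set Pt) ≠ {c, d} := by rw [Set.pair_comm b a]; exact hne
    obtain ⟨z', w', m1, m2, m3, m4⟩ := cross_aux hgp hdx hb ha hc hd h1 h2 hz hz' hne'
    exact ⟨z', w', by rwa [openSegment_symm] at m1, m2, m3, m4⟩
  · rw [openSegment_symm] at hz hz'
    have hne' : ({b, a} : Set Pt) ≠ {d, c} := by rw [Set.pair_comm b a, Set.pair_comm d c]; exact hne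
    obtain ⟨z', w', m1, m2, m3, m4⟩ := cross_aux hgp hdx hb ha hd hc h1 h2 hz hz' hne'
    exact ⟨z', w', by rwa [openSegment_symm] at m1, by rwa [openSegment_symm] at m2, m3, m4⟩

end CFAux


section UnitAux
open CFAux

variable {P : Set Pt}

lemma lftx_le {u : GGraph P} {p : Pt} (hp : p ∈ u.V) : lftx u ≤ p.1 :=
  csInf_le (u.hVfin.image Prod.fst).bddBelow ⟨p, hp, rfl⟩

lemma le_rgtx {u : GGraph P} {p : Pt} (hp : p ∈ u.V) : p.1 ≤ rgtx u :=
  le_csSup (u.hVfin.image Prod.fst).bddAbove ⟨p, hp, rfl⟩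

lemma lftx_le_rgtx (u : GGraph P) : lftx u ≤ rgtx u := by
  obtain ⟨p, hp⟩ := u.hVne
  exact le_trans (lftx_le hp) (le_rgtx hp)

lemma seg_bounds (hdx : DistinctX P) {u : GGraph P} {e : Pt × Pt} (he : e ∈ u.E)
    {z : Pt} (hz : z ∈ openSegment ℝ e.1 e.2) : lftx u < z.1 ∧ z.1 < rgtx u := by
  obtain ⟨h1, h2, hne⟩ := u.hE e he
  have hx : e.1.1 ≠ e.2.1 := hdx e.1 (u.hVP h1) e.2 (u.hVP h2) hne
  rcases hx.lt_or_gt with h | h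
  · obtain ⟨b1, b2, -⟩ := mem_open_elim h hz
    exact ⟨lt_of_le_of_lt (lftx_le h1) b1, lt_of_lt_of_le b2 (le_rgtx h2)⟩
  · rw [openSegment_symm] at hz
    obtain ⟨b1, b2, -⟩ := mem_open_elim h hz
    exact ⟨lt_of_le_of_lt (lftx_le h2) b1, lt_of_lt_of_le b2 (le_rgtx h1)⟩

lemma belowAt_dep (hdx : DistinctX P) {u w : GGraph P} {e f : Pt × Pt}
    (he : e ∈ u.E) (hf : f ∈ w.E)
    {z z' : Pt} (hz : z ∈ openSegment ℝ e.1 e.2) (hz' : z' ∈ openSegment ℝ f.1 f.2)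
    (hx : z.1 = z'.1) (hy : z.2 < z'.2) : GDependsOn u w := by
  obtain ⟨h1, h2, hne⟩ := u.hE e he
  obtain ⟨h1', h2', hne'⟩ := w.hE f hf
  rcases key_below hdx (u.hVP h1) (u.hVP h2) (w.hVP h1') (w.hVP h2') hne hne' hz hz' hx hy with
    ⟨p, hp, w', hw', hxx, hyy⟩ | ⟨q, hq, z'', hz'', hxx, hyy⟩
  · have hpV : p ∈ u.V := by rcases hp with rfl | rfl; exacts [h1, h2]
    exact Or.inl ⟨p, hpV, u.hVP hpV, f, hf, w', hw', hxx, hyy⟩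
  · have hqV : q ∈ w.V := by rcases hq with rfl | rfl; exacts [h1', h2']
    exact Or.inr ⟨q, ⟨w.hVP hqV, e, he, z'', hz'', hxx, hyy⟩, hqV⟩

lemma gcross_dep (hgp : GenPos P) (hdx : DistinctX P) {u v : GGraph P}
    (h : GCross u v) : GDependsOn u v := by
  obtain ⟨e, he, f, hf, ⟨z, hz1, hz2⟩, hne⟩ := h
  obtain ⟨h1, h2, hne1⟩ := u.hE e he
  obtain ⟨h1', h2', hne2⟩ := v.hE f hf
  obtain ⟨z', w', m1, m2, m3, m4⟩ := cross_below hgp hdx (u.hVP h1) (u.hVP h2)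
    (v.hVP h1') (v.hVP h2') hne1 hne2 hz1 hz2 hne
  exact belowAt_dep hdx he hf m1 m2 m3 m4

lemma gcross_symm {u v : GGraph P} (h : GCross u v) : GCross v u := by
  obtain ⟨e, he, f, hf, hmeet, hne⟩ := h
  exact ⟨f, hf, e, he, by rwa [Set.inter_comm], Ne.symm hne⟩

lemma not_gcross_self (u : GGraph P) : ¬ GCross u u := by
  rintro ⟨e, he, f, hf, hmeet, hne⟩
  exact u.hCF e he f hf ⟨hmeet, hne⟩

lemma unit_ext {u w : GGraph P} (hV : u.V = w.V) (hE : u.E = w.E) : u = w := by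
  cases u; cases w
  simp only at hV hE
  subst hV; subst hE
  rfl

lemma unit_eq_degenerate (hdx : DistinctX P) {u w : GGraph P}
    (h1 : rgtx u ≤ lftx u) (h2 : rgtx w ≤ lftx w) (h3 : lftx u = lftx w) : u = w := by
  obtain ⟨p, hp⟩ := u.hVne
  obtain ⟨q, hq⟩ := w.hVne
  have hpx : p.1 = lftx u := le_antisymm (le_trans (le_rgtx hp) h1) (lftx_le hp)
  have hqx : q.1 = lftx w := le_antisymm (le_trans (le_rgtx hq) h2) (lftx_le hq)
  have hpq : p = q := by
    by_contra hne
    exact hdx p (u.hVP hp) q (w.hVP hq) hne (by rw [hpx, hqx, h3])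
  have hVu : u.V = {p} := by
    apply Set.Subset.antisymm
    · intro x hx
      have hxx : x.1 = lftx u := le_antisymm (le_trans (le_rgtx hx) h1) (lftx_le hx)
      have : x = p := by
        by_contra hne
        exact hdx x (u.hVP hx) p (u.hVP hp) hne (by rw [hxx, hpx])
      simp [this]
    · intro x hx; rw [Set.mem_singleton_iff] at hx; subst hx; exact hp
  have hVw : w.V = {p} := by
    apply Set.Subset.antisymm
    · intro x hx
      have hxx : x.1 = lftx w := le_antisymm (le_trans (le_rgtx hx) h2) (lftx_le hx)
      have : x = q := by
        by_contra hne
        exact hdx x (w.hVP hx) q (w.hVP hq) hne (by rw [hxx, hqx])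
      simp [this, ← hpq]
    · intro x hx; rw [Set.mem_singleton_iff] at hx; subst hx; exact hpq ▸ hq
  have hEu : u.E = ∅ := by
    ext e
    simp only [Set.mem_empty_iff_false, iff_false]
    intro he
    obtain ⟨a1, a2, a3⟩ := u.hE e he
    rw [hVu, Set.mem_singleton_iff] at a1 a2
    exact a3 (a1.trans a2.symm)
  have hEw : w.E = ∅ := by
    ext e
    simp only [Set.mem_empty_iff_false, iff_false]
    intro he
    obtain ⟨a1, a2, a3⟩ := w.hE e he
    rw [hVw, Set.mem_singleton_iff] at a1 a2
    exact a3 (a1.trans a2.symm)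
  exact unit_ext (hVu.trans hVw.symm) (hEu.trans hEw.symm)

lemma rme_unique (hdx : DistinctX P) {C : Set (GGraph P)} {a b : GGraph P}
    (ha : RME C a) (hb : RME C b) : a = b := by
  by_contra hne
  have h1 : rgtx b ≤ lftx a := ha.2 b hb.1 (Ne.symm hne)
  have h2 : rgtx a ≤ lftx b := hb.2 a ha.1 hne
  have h3 := lftx_le_rgtx a
  have h4 := lftx_le_rgtx b
  exact hne (unit_eq_degenerate hdx (by linarith) (by linarith) (by linarith))

lemma mem_ptsC {C : Set (GGraph P)} {q : Pt} :
    q ∈ ptsC C ↔ ∃ w ∈ C, q ∈ w.V := by simp [ptsC]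

lemma mem_lowC {C : Set (GGraph P)} {q : Pt} :
    q ∈ lowC C ↔ ∃ w ∈ C, q ∈ lowG w := by simp [lowC]

lemma lowC_insert (u : GGraph P) (C : Set (GGraph P)) :
    lowC (insert u C) = lowG u ∪ lowC C := by
  simp [lowC, Set.biUnion_insert]

lemma ptsC_insert (u : GGraph P) (C : Set (GGraph P)) :
    ptsC (insert u C) = u.V ∪ ptsC C := by
  simp [ptsC, Set.biUnion_insert]

end UnitAux

theorem cf_equivalence_coherent
    (P : Set Pt) (hPfin : P.Finite) (hgp : GenPos P) (hdx : DistinctX P)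
    (U : Set (GGraph P)) (hser : Serializable U) (hprog : Progressive U)
    (C₁ C₂ : Set (GGraph P)) (hC₁ : C₁ ∈ CFcomb U) (hC₂ : C₂ ∈ CFcomb U)
    (heqv : CEqv C₁ C₂)
    (u : GGraph P) (hu : u ∈ U) (huC₁ : u ∉ C₁)
    (hC₁' : insert u C₁ ∈ CFcomb U) (hrme : RME (insert u C₁) u) :
    insert u C₂ ∈ CFcomb U ∧ CEqv (insert u C₁) (insert u C₂) ∧
      RME (insert u C₂) u ∧ u ∉ C₂ := by
  obtain ⟨hlow12, hpts12, hrmes⟩ := heqv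
  -- no element of C₁ depends on u
  have F1 : ∀ w ∈ C₁, ¬ GDependsOn u w := by
    intro w hw
    exact hrme.1.2 w (Set.mem_insert_of_mem _ hw) (by rintro rfl; exact huC₁ hw)
  -- vertices of u avoid all shadows of C₂
  have F4 : ∀ v ∈ C₂, ∀ p ∈ u.V, p ∉ lowG v := by
    intro v hv p hp hpl
    have hpc : p ∈ lowC C₂ := mem_lowC.mpr ⟨v, hv, hpl⟩
    rw [← hlow12] at hpc
    obtain ⟨w, hw, hpw⟩ := mem_lowC.mp hpc
    exact F1 w hw (Or.inl ⟨p, hp, hpw⟩)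
  -- vertices of C₂ avoid the upper shadow of u
  have F5 : ∀ v ∈ C₂, ∀ q ∈ v.V, q ∉ upG u := by
    intro v hv q hq hup
    by_cases hql : q ∈ lowC C₂
    · rw [← hlow12] at hql
      obtain ⟨w, hw, hqw⟩ := mem_lowC.mp hql
      obtain ⟨hqP, f, hf, zf, hzf, hzfx, hzfy⟩ := hqw
      obtain ⟨hqP', e, he, ze, hze, hzex, hzey⟩ := hup
      exact F1 w hw (belowAt_dep hdx he hf hze hzf (hzex.trans hzfx.symm) (lt_trans hzey hzfy))
    · have hqd : q ∈ ptsC C₂ \ lowC C₂ := ⟨mem_ptsC.mpr ⟨v, hv, hq⟩, hql⟩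
      rw [← hpts12] at hqd
      obtain ⟨w, hw, hqw⟩ := mem_ptsC.mp hqd.1
      exact F1 w hw (Or.inr ⟨q, hup, hqw⟩)
  have F6 : ∀ v ∈ C₂, ¬ GDependsOn u v := by
    rintro v hv (⟨p, hp, hpl⟩ | ⟨q, hqu, hqv⟩)
    · exact F4 v hv p hp hpl
    · exact F5 v hv q hqv hqu
  have F7 : ∀ v ∈ C₂, ¬ GCross u v := fun v hv h => F6 v hv (gcross_dep hgp hdx h)
  have F7' : ∀ v ∈ C₂, ¬ GCross v u := fun v hv h => F7 v hv (gcross_symm h)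
  -- first goal
  have hC₂' : insert u C₂ ∈ CFcomb U := by
    refine ⟨Set.insert_subset_iff.mpr ⟨hu, hC₂.1⟩, hC₂.2.1.insert u, ?_⟩
    intro a ha b hb
    rcases ha with rfl | ha <;> rcases hb with rfl | hb
    · exact not_gcross_self _
    · exact F7 b hb
    · exact F7' a ha
    · exact hC₂.2.2 a ha b hb
  have F9 : Extreme (insert u C₂) u := by
    refine ⟨Set.mem_insert _ _, ?_⟩
    intro v hv hvne
    rcases hv with rfl | hv
    · exact absurd rfl hvne
    · exact F6 v hv
  -- C₁ is nonempty as soon as C₂ is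
  have hC1ne : C₂.Nonempty → C₁.Nonempty := by
    rintro ⟨v, hv⟩
    obtain ⟨q, hq⟩ := v.hVne
    by_cases hql : q ∈ lowC C₂
    · rw [← hlow12] at hql
      obtain ⟨w, hw, -⟩ := mem_lowC.mp hql
      exact ⟨w, hw⟩
    · have hqd : q ∈ ptsC C₂ \ lowC C₂ := ⟨mem_ptsC.mpr ⟨v, hv, hq⟩, hql⟩
      rw [← hpts12] at hqd
      obtain ⟨w, hw, -⟩ := mem_ptsC.mp hqd.1
      exact ⟨w, hw⟩
  -- the crucial claim
  have claimR : ∀ v, v ∈ C₂ → v ≠ u → Extreme (insert u C₂) v → rgtx v ≤ lftx u := by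
    intro v hv hvu hvext
    have hvU : v ∈ U := hC₂.1 hv
    -- x-separation of u and v from serializability of the pair {u, v}
    have pairsep : rgtx v ≤ lftx u ∨ rgtx u ≤ lftx v := by
      have hpair : ({u, v} : Set (GGraph P)) ∈ CFcomb U := by
        refine ⟨?_, (Set.finite_singleton v).insert u, ?_⟩
        · intro x hx
          rcases hx with rfl | hx
          · exact hu
          · rw [Set.mem_singleton_iff] at hx; subst hx; exact hvU
        · intro a ha b hb
          rcases ha with rfl | ha <;> rcases hb with rfl | hb
          · exact not_gcross_self _
          · rw [Set.mem_singleton_iff] at hb; subst hb; exact F7 b hv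
          · rw [Set.mem_singleton_iff] at ha; subst ha; exact F7' a hv
          · rw [Set.mem_singleton_iff] at ha hb; subst ha; subst hb; exact not_gcross_self _
      obtain ⟨r, hrR, -⟩ := hser.2 _ hpair ⟨u, Set.mem_insert _ _⟩
      have hextu : Extreme {u, v} u := by
        refine ⟨Set.mem_insert _ _, ?_⟩
        intro x hx hxne
        rcases hx with h | hx
        · exact absurd h hxne
        · rw [Set.mem_singleton_iff] at hx; rw [hx]; exact F6 v hv
      have hextv : Extreme {u, v} v := by
        refine ⟨by simp, ?_⟩
        intro x hx hxne
        rcases hx with h | hx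
        · rw [h]; exact hvext.2 u (Set.mem_insert _ _) (Ne.symm hvu)
        · rw [Set.mem_singleton_iff] at hx; exact absurd hx hxne
      have hr : r = u ∨ r = v := by
        rcases hrR.1.1 with h | h
        · exact Or.inl h
        · exact Or.inr h
      rcases hr with rfl | rfl
      · exact Or.inl (hrR.2 v hextv hvu)
      · exact Or.inr (hrR.2 u hextu (Ne.symm hvu))
    rcases pairsep with h | hstar
    · exact h
    by_contra hcon
    push_neg at hcon
    obtain ⟨w₁, hw₁, -⟩ := hser.2 C₁ hC₁ (hC1ne ⟨v, hv⟩)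
    obtain ⟨w₂, hw₂, -⟩ := hser.2 C₂ hC₂ ⟨v, hv⟩
    have hll : lftx w₁ = lftx w₂ := hrmes w₁ w₂ hw₁ hw₂
    have hw₁u : w₁ ≠ u := by rintro rfl; exact huC₁ hw₁.1.1
    have hvextC₂ : Extreme C₂ v :=
      ⟨hv, fun x hx hxne => hvext.2 x (Set.mem_insert_of_mem _ hx) hxne⟩
    have hDepW₁u : rgtx u ≤ lftx w₁ → ¬ GDependsOn w₁ u := by
      intro hle hdep
      rcases hdep with ⟨q, hqw, hql⟩ | ⟨q, hqup, hqu⟩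
      · obtain ⟨hqP, e, he, zz, hzz, hzx, hzy⟩ := hql
        have h1 := (seg_bounds hdx he hzz).2
        have h2 : lftx w₁ ≤ q.1 := lftx_le hqw
        linarith [hzx ▸ h1]
      · obtain ⟨hqP, f, hf, zz, hzz, hzx, hzy⟩ := hqup
        have h1 := (seg_bounds hdx hf hzz).1
        have h2 : q.1 ≤ rgtx u := le_rgtx hqu
        linarith [hzx ▸ h1]
    rcases eq_or_ne v w₂ with rfl | hvw₂
    · -- v is the RME of C₂
      have hru : rgtx u ≤ lftx w₁ := by rw [hll]; exact hstar
      have hext1 : Extreme (insert u C₁) w₁ := by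
        refine ⟨Set.mem_insert_of_mem _ hw₁.1.1, ?_⟩
        intro x hx hxne
        rcases hx with rfl | hx
        · exact hDepW₁u hru
        · exact hw₁.1.2 x hx hxne
      have h3 : rgtx w₁ ≤ lftx u := hrme.2 w₁ hext1 hw₁u
      have e1 := lftx_le_rgtx u
      have e2 := lftx_le_rgtx w₁
      have : u = w₁ := unit_eq_degenerate hdx (by linarith) (by linarith) (by linarith)
      exact huC₁ (this ▸ hw₁.1.1)
    · have hrv : rgtx v ≤ lftx w₂ := hw₂.2 v hvextC₂ hvw₂
      by_cases hext1 : Extreme (insert u C₁) w₁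
      · have h3 := hrme.2 w₁ hext1 hw₁u
        have e2 := lftx_le_rgtx w₁
        linarith
      · have hW₁mem : w₁ ∈ insert u C₁ := Set.mem_insert_of_mem _ hw₁.1.1
        have hex : ∃ x ∈ insert u C₁, x ≠ w₁ ∧ GDependsOn w₁ x := by
          by_contra h
          push_neg at h
          exact hext1 ⟨hW₁mem, fun x hx hxne => h x hx hxne⟩
        obtain ⟨x, hx, hxne, hdep⟩ := hex
        rcases hx with h | hx
        · have hru : rgtx u ≤ lftx w₁ := by
            have := lftx_le_rgtx v
            linarith
          exact hDepW₁u hru (h ▸ hdep)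
        · exact hw₁.1.2 x hx hxne hdep
  -- u is not in C₂
  have huC₂ : u ∉ C₂ := by
    intro huC₂
    have hins : insert u C₂ = C₂ := Set.insert_eq_self.mpr huC₂
    have hRu : RME C₂ u := by
      refine ⟨⟨huC₂, fun v hv hvne => F6 v hv⟩, ?_⟩
      intro v hvext hvu
      exact claimR v hvext.1 hvu (by rw [hins]; exact hvext)
    obtain ⟨w₁, hw₁, -⟩ := hser.2 C₁ hC₁ (hC1ne ⟨u, huC₂⟩)
    have hlu : lftx w₁ = lftx u := hrmes w₁ u hw₁ hRu
    have hCE : CEqv C₁ (insert u C₁) := by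
      have hlowu : lowG u ⊆ lowC C₁ := by
        rw [hlow12]
        intro x hx
        exact mem_lowC.mpr ⟨u, huC₂, hx⟩
      have hlowins : lowC (insert u C₁) = lowC C₁ := by
        rw [lowC_insert]
        exact Set.union_eq_self_of_subset_left hlowu
      refine ⟨hlowins.symm, ?_, ?_⟩
      · rw [hlowins, ptsC_insert]
        apply Set.Subset.antisymm
        · exact Set.diff_subset_diff_left Set.subset_union_right
        · rintro x ⟨hx, hxl⟩
          rcases hx with hx | hx
          · have hx2 : x ∈ ptsC C₂ \ lowC C₂ := by
              refine ⟨mem_ptsC.mpr ⟨u, huC₂, hx⟩, ?_⟩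
              rwa [← hlow12]
            rw [← hpts12] at hx2
            exact hx2
          · exact ⟨hx, hxl⟩
      · intro x y hx hy
        rw [rme_unique hdx hx hw₁, rme_unique hdx hy hrme]
        exact hlu
    have hC₁eq : C₁ = insert u C₁ \ {u} := by
      ext x
      simp only [Set.mem_diff, Set.mem_insert_iff, Set.mem_singleton_iff]
      constructor
      · intro hx
        exact ⟨Or.inr hx, by rintro rfl; exact huC₁ hx⟩
      · rintro ⟨hx | hx, hne⟩
        · exact absurd hx hne
        · exact hx
    exact hprog C₁ (insert u C₁) u hC₁' hrme hC₁eq hCE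
  -- u is the right-most extreme element of insert u C₂
  have hRME₂ : RME (insert u C₂) u := by
    refine ⟨F9, ?_⟩
    intro v hvext hvu
    have hvC₂ : v ∈ C₂ := by
      rcases hvext.1 with rfl | h
      · exact absurd rfl hvu
      · exact h
    exact claimR v hvC₂ hvu hvext
  refine ⟨hC₂', ⟨?_, ?_, ?_⟩, hRME₂, huC₂⟩
  · rw [lowC_insert, lowC_insert, hlow12]
  · rw [lowC_insert, lowC_insert, ptsC_insert, ptsC_insert, hlow12]
    ext x
    simp only [Set.mem_diff, Set.mem_union]
    constructor
    · rintro ⟨hx | hx, hnl⟩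
      · exact ⟨Or.inl hx, hnl⟩
      · have hx2 : x ∈ ptsC C₁ \ lowC C₁ := ⟨hx, fun hc => hnl (Or.inr (hlow12 ▸ hc))⟩
        rw [hpts12] at hx2
        exact ⟨Or.inr hx2.1, hnl⟩
    · rintro ⟨hx | hx, hnl⟩
      · exact ⟨Or.inl hx, hnl⟩
      · have hx2 : x ∈ ptsC C₂ \ lowC C₂ := ⟨hx, fun hc => hnl (Or.inr hc)⟩
        rw [← hpts12] at hx2
        exact ⟨Or.inr hx2.1, fun hc => hnl hc⟩
  · intro x y hx hy
    rw [rme_unique hdx hx hrme, rme_unique hdx hy hRME₂]
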